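/- Let (X,d) be a sequentially Yoneda-complete T1 bounded quasi-metric space, let K ∈ K_0(X), let x ∈ K, and let (F_n) be a standard representation of K. Then there exists a sequence ((x_n, r_n))_{n>0} with (x_n, r_n) ∈ F_n for every n and d*(x_n, x) → 0, where d*(a,b) = max{d(a,b), d(b,a)}. -/

import Mathlib

open scoped NNReal

/-! Generic sequence notions for an arbitrary "distance" function `ρ`. -/

def IsCauchySeq {α : Type _} (ρ : α → α → ℝ) (u : ℕ → α) : Prop :=
  ∀ ε : ℝ, 0 < ε → ∃ N, ∀ n m, N ≤ n → n ≤ m → ρ (u n) (u m) < ε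

def IsBiCauchySeq {α : Type _} (ρ : α → α → ℝ) (u : ℕ → α) : Prop :=
  ∀ ε : ℝ, 0 < ε → ∃ N, ∀ n m, N ≤ n → N ≤ m → ρ (u n) (u m) < ε

/-- `sup_{m ≥ n} ρ (u m) y`. -/
noncomputable def supTail {α : Type _} (ρ : α → α → ℝ) (u : ℕ → α) (y : α) (n : ℕ) : ℝ :=
  sSup {t | ∃ m, n ≤ m ∧ t = ρ (u m) y}

/-- `x` is a Yoneda limit of `u`:  `ρ x y = inf_n sup_{m ≥ n} ρ (u m) y` for all `y`. -/
def IsYonedaLim {α : Type _} (ρ : α → α → ℝ) (u : ℕ → α) (x : α) : Prop :=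
  ∀ y, ρ x y = sInf (Set.range (supTail ρ u y))

def SeqYonedaCompleteD {α : Type _} (ρ : α → α → ℝ) : Prop :=
  ∀ u, IsCauchySeq ρ u → ∃ x, IsYonedaLim ρ u x

/-- Smyth completeness: every Cauchy sequence converges in the symmetrized metric. -/
def SmythCompleteD {α : Type _} (ρ : α → α → ℝ) : Prop :=
  ∀ u, IsCauchySeq ρ u → ∃ x, ∀ ε : ℝ, 0 < ε → ∃ N, ∀ n, N ≤ n →
    max (ρ x (u n)) (ρ (u n) x) < ε

/-- `inf_{m ≥ n} ρ e (u m)`. -/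
noncomputable def infTail {α : Type _} (ρ : α → α → ℝ) (u : ℕ → α) (e : α) (n : ℕ) : ℝ :=
  sInf {t | ∃ m, n ≤ m ∧ t = ρ e (u m)}

/-- `e` is a finite point: for every Cauchy sequence `u` with Yoneda limit `x`,
`ρ e x = sup_n inf_{m ≥ n} ρ e (u m)`. -/
def IsFinitePoint {α : Type _} (ρ : α → α → ℝ) (e : α) : Prop :=
  ∀ u x, IsCauchySeq ρ u → IsYonedaLim ρ u x →
    ρ e x = sSup (Set.range (infTail ρ u e))

/-- ω-algebraic: a countable set of finite points such that every point is a Yoneda limit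
of a Cauchy sequence of points from it. -/
def OmegaAlgebraicD {α : Type _} (ρ : α → α → ℝ) : Prop :=
  ∃ X0 : Set α, X0.Countable ∧ (∀ e ∈ X0, IsFinitePoint ρ e) ∧
    ∀ x, ∃ u : ℕ → α, (∀ n, u n ∈ X0) ∧ IsCauchySeq ρ u ∧ IsYonedaLim ρ u x

/-- A quasi-metric on `X`. -/
structure QuasiMetric (X : Type _) : Type _ where
  d : X → X → ℝ
  nonneg : ∀ x y, 0 ≤ d x y
  triangle : ∀ x y z, d x z ≤ d x y + d y z
  eq_iff : ∀ x y, x = y ↔ d x y = 0 ∧ d y x = 0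

/-- Formal balls over `X`. -/
abbrev FB (X : Type _) := X × ℝ≥0

/-- Nonempty finite subsets of the space of formal balls. -/
def PFin (X : Type _) : Type _ := {F : Set (FB X) // F.Finite ∧ F.Nonempty}

namespace QuasiMetric

variable {X : Type _} (Q : QuasiMetric X)

def IsT1 : Prop := ∀ x y, Q.d x y = 0 → x = y

def Bounded : Prop := ∃ C : ℝ, ∀ x y, Q.d x y ≤ C

def ball (x : X) (ε : ℝ) : Set X := {y | Q.d x y < ε}

/-- The topology `τ_d` induced by the quasi-metric. -/
def tau : TopologicalSpace X :=
  TopologicalSpace.generateFrom {s | ∃ x ε, 0 < ε ∧ s = Q.ball x ε}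

def dstar (x y : X) : ℝ := max (Q.d x y) (Q.d y x)

def SeqYonedaComplete : Prop := SeqYonedaCompleteD Q.d

def SmythComplete : Prop := SmythCompleteD Q.d

/-- `K` is `d⁻¹`-precompact. -/
def dInvPrecompact (K : Set X) : Prop :=
  ∀ ε : ℝ, 0 < ε → ∃ F : Set X, F.Finite ∧ F ⊆ K ∧ ∀ k ∈ K, ∃ x ∈ F, Q.d k x < ε

/-- The nonempty compact subsets of `(X, τ_d)`. -/
def K0 : Set (Set X) := {K | K.Nonempty ∧ @IsCompact X Q.tau K}

noncomputable def dPtSet (x : X) (B : Set X) : ℝ := sInf {t | ∃ b ∈ B, t = Q.d x b}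

noncomputable def dSetPt (A : Set X) (y : X) : ℝ := sInf {t | ∃ a ∈ A, t = Q.d a y}

/-- The Hausdorff quasi-metric. -/
noncomputable def Hd (A B : Set X) : ℝ :=
  max (sSup {t | ∃ b ∈ B, t = Q.dSetPt A b}) (sSup {t | ∃ a ∈ A, t = Q.dPtSet a B})

/-- Order on formal balls: `(x,r) ⊑ (y,s)  ↔  d x y ≤ r - s`. -/
def ble (a b : FB X) : Prop := Q.d a.1 b.1 ≤ (a.2 : ℝ) - (b.2 : ℝ)

/-- Auxiliary relation: `(x,r) ≺ (y,s)  ↔  d x y < r - s`. -/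
def blt (a b : FB X) : Prop := Q.d a.1 b.1 < (a.2 : ℝ) - (b.2 : ℝ)

def iota (x : X) : FB X := (x, 0)

/-- The quasi-metric `q` on formal balls. -/
noncomputable def q (a b : FB X) : ℝ :=
  max (Q.d a.1 b.1) |(a.2 : ℝ) - (b.2 : ℝ)| + ((b.2 : ℝ) - (a.2 : ℝ))

/-- The Egli–Milner relation `≺_EM` on nonempty finite sets of formal balls. -/
def em (F G : PFin X) : Prop :=
  (∀ b ∈ G.1, ∃ a ∈ F.1, Q.blt a b) ∧ (∀ a ∈ F.1, ∃ b ∈ G.1, Q.blt a b)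

/-- The non-strict Egli–Milner relation `⊑_EM`. -/
def emLE (F G : PFin X) : Prop :=
  (∀ a ∈ F.1, ∃ b ∈ G.1, Q.ble a b) ∧ (∀ b ∈ G.1, ∃ a ∈ F.1, Q.ble a b)

/-- `rF = max { r : (x,r) ∈ F }`. -/
noncomputable def rF (F : PFin X) : ℝ := sSup {t | ∃ p ∈ F.1, t = (p.2 : ℝ)}

/-- `δ(F,G) = min {(r-s) - d x y : (x,r) ∈ F, (y,s) ∈ G, (x,r) ≺ (y,s)}`. -/
noncomputable def delta (F G : PFin X) : ℝ :=
  sInf {t | ∃ a ∈ F.1, ∃ b ∈ G.1, Q.blt a b ∧ t = ((a.2 : ℝ) - (b.2 : ℝ)) - Q.d a.1 b.1}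

/-- The Hausdorff quasi-metric `H_q` on `P_fin(BX)` induced by `q`. -/
noncomputable def Hq (F G : PFin X) : ℝ :=
  max (sSup {t | ∃ a ∈ F.1, t = sInf {s | ∃ b ∈ G.1, s = Q.q a b}})
      (sSup {t | ∃ b ∈ G.1, t = sInf {s | ∃ a ∈ F.1, s = Q.q a b}})

/-- ω-chains in `(P_fin(BX), ≺_EM)`; `c n` plays the role of `F_{n+1}`. -/
def Chain : Type _ := {c : ℕ → PFin X // ∀ n, Q.em (c n) (c (n + 1))}

def chainLE (c c' : Q.Chain) : Prop := ∀ n, ∃ m, Q.em (c.1 n) (c'.1 m)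

def chainEquiv (c c' : Q.Chain) : Prop := Q.chainLE c c' ∧ Q.chainLE c' c

lemma blt_trans {a b c : FB X} (h1 : Q.blt a b) (h2 : Q.blt b c) : Q.blt a c := by
  have h3 := Q.triangle a.1 b.1 c.1
  unfold blt at h1 h2 ⊢
  linarith

lemma em_trans {F G H : PFin X} (h1 : Q.em F G) (h2 : Q.em G H) : Q.em F H := by
  constructor
  · intro b hb
    obtain ⟨a, ha, hab⟩ := h2.1 b hb
    obtain ⟨a', ha', h'⟩ := h1.1 a ha
    exact ⟨a', ha', Q.blt_trans h' hab⟩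
  · intro a ha
    obtain ⟨b, hb, hab⟩ := h1.2 a ha
    obtain ⟨c, hc, hbc⟩ := h2.2 b hb
    exact ⟨c, hc, Q.blt_trans hab hbc⟩

lemma chainLE_refl (c : Q.Chain) : Q.chainLE c c := fun n => ⟨n + 1, c.2 n⟩

lemma chainLE_trans {a b c : Q.Chain} (h1 : Q.chainLE a b) (h2 : Q.chainLE b c) :
    Q.chainLE a c := by
  intro n
  obtain ⟨m, hm⟩ := h1 n
  obtain ⟨k, hk⟩ := h2 m
  exact ⟨k, Q.em_trans hm hk⟩

def chainSetoid : Setoid Q.Chain where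
  r := Q.chainEquiv
  iseqv := ⟨fun c => ⟨Q.chainLE_refl c, Q.chainLE_refl c⟩,
    fun h => ⟨h.2, h.1⟩,
    fun h1 h2 => ⟨Q.chainLE_trans h1.1 h2.1, Q.chainLE_trans h2.2 h1.2⟩⟩

/-- The ω-Plotkin domain `CBX`: equivalence classes of ω-chains in `(P_fin(BX), ≺_EM)`. -/
def CBX : Type _ := Quotient Q.chainSetoid

/-- The partial order of `CBX`. -/
def cbLE : Q.CBX → Q.CBX → Prop :=
  Quotient.lift₂ Q.chainLE (by
    intro a b a' b' ha hb
    have ha' : Q.chainEquiv a a' := ha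
    have hb' : Q.chainEquiv b b' := hb
    exact propext ⟨fun h => Q.chainLE_trans (Q.chainLE_trans ha'.2 h) hb'.1,
      fun h => Q.chainLE_trans (Q.chainLE_trans ha'.1 h) hb'.2⟩)

def chainWB (c c' : Q.Chain) : Prop := ∃ m, ∀ n, Q.em (c.1 n) (c'.1 m)

/-- The way-below relation of `CBX`. -/
def cbWB : Q.CBX → Q.CBX → Prop :=
  Quotient.lift₂ Q.chainWB (by
    intro a b a' b' ha hb
    have ha' : Q.chainEquiv a a' := ha
    have hb' : Q.chainEquiv b b' := hb
    apply propext
    constructor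
    · rintro ⟨m, hm⟩
      obtain ⟨k, hk⟩ := hb'.1 m
      refine ⟨k, fun n => ?_⟩
      obtain ⟨p, hp⟩ := ha'.2 n
      exact Q.em_trans hp (Q.em_trans (hm p) hk)
    · rintro ⟨m, hm⟩
      obtain ⟨k, hk⟩ := hb'.2 m
      refine ⟨k, fun n => ?_⟩
      obtain ⟨p, hp⟩ := ha'.1 n
      exact Q.em_trans hp (Q.em_trans (hm p) hk))

/-- The Scott topology of `CBX`, generated by the sets `↟I`. -/
def scottTop : TopologicalSpace Q.CBX :=
  TopologicalSpace.generateFrom {s | ∃ I : Q.CBX, s = {J | Q.cbWB I J}}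

def upSet (F : PFin X) : Set (FB X) := {b | ∃ a ∈ F.1, Q.ble a b}

/-- `I⁺ = ⋂_n ↑F_n` for a representing chain. -/
def Iplus (c : Q.Chain) : Set (FB X) := ⋂ n, Q.upSet (c.1 n)

noncomputable def IplusQ (I : Q.CBX) : Set (FB X) := Q.Iplus (Quotient.out I)

/-- `r̄ I = inf { rF : F occurs in some chain representing I }`. -/
noncomputable def rbar (I : Q.CBX) : ℝ :=
  sInf {t | ∃ c : Q.Chain, Quotient.mk Q.chainSetoid c = I ∧ ∃ n, t = rF (c.1 n)}

/-- `c` is a standard representation of `K`: `c n` (playing the role of `F_{n+1}`) is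
`{(x_i^j, 1/(n+1)) : 1 ≤ j ≤ n+1, 1 ≤ i ≤ m_j}` where the `x_i^j ∈ K` satisfy
`∀ y ∈ K, ∃ i, d (x_i^j) y < 1/(2 j²)`. -/
def IsStdRep (K : Set X) (c : Q.Chain) : Prop :=
  ∃ (m : ℕ → ℕ) (x : ℕ → ℕ → X),
    (∀ j i, 1 ≤ j → 1 ≤ i → i ≤ m j → x j i ∈ K) ∧
    (∀ j, 1 ≤ j → ∀ y ∈ K, ∃ i, 1 ≤ i ∧ i ≤ m j ∧ Q.d (x j i) y < 1 / (2 * (j : ℝ) ^ 2)) ∧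
    (∀ n : ℕ, (c.1 n).1 =
      {p : FB X | ∃ j i, 1 ≤ j ∧ j ≤ n + 1 ∧ 1 ≤ i ∧ i ≤ m j ∧
        p = (x j i, ((n : ℝ≥0) + 1)⁻¹)})

/-- `D` on representing chains: `sup_n inf_m H_q(F_n, G_m)`. -/
noncomputable def Dchain (c c' : Q.Chain) : ℝ :=
  sSup {t | ∃ n, t = sInf {s | ∃ m, s = Q.Hq (c.1 n) (c'.1 m)}}

/-- The quasi-metric `D` on `CBX`. -/
noncomputable def D (I J : Q.CBX) : ℝ := Q.Dchain (Quotient.out I) (Quotient.out J)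

/-- The topology induced by `D` on `CBX`. -/
def DTop : TopologicalSpace Q.CBX :=
  TopologicalSpace.generateFrom
    {s | ∃ (I : Q.CBX) (ε : ℝ), 0 < ε ∧ s = {J | Q.D I J < ε}}

/-- The hyperspace `K_0(X)` as a type. -/
def K0T : Type _ := {K : Set X // K.Nonempty ∧ @IsCompact X Q.tau K}

/-- The Vietoris topology on `K_0(X)`. -/
def vietoris : TopologicalSpace Q.K0T :=
  TopologicalSpace.generateFrom
    ({s | ∃ V : Set X, @IsOpen X Q.tau V ∧ s = {K : Q.K0T | (K.1 ∩ V).Nonempty}} ∪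
     {s | ∃ V : Set X, @IsOpen X Q.tau V ∧ s = {K : Q.K0T | K.1 ⊆ V}})

/-- The topology of the Hausdorff quasi-metric on `K_0(X)`. -/
def hdTop : TopologicalSpace Q.K0T :=
  TopologicalSpace.generateFrom
    {s | ∃ (K : Q.K0T) (ε : ℝ), 0 < ε ∧ s = {L : Q.K0T | Q.Hd K.1 L.1 < ε}}

/-- Round ideals of `(P_fin(BX), ≺_EM)`. -/
def IsRoundIdeal (I : Set (PFin X)) : Prop :=
  I.Nonempty ∧ (∀ F G : PFin X, Q.em F G → G ∈ I → F ∈ I) ∧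
  (∀ F ∈ I, ∀ G ∈ I, ∃ H ∈ I, Q.em F H ∧ Q.em G H)

end QuasiMetric

/-!
Choose in `F_n` a net point `x_n` with `d (x_n, x) < 1/(2n²)`, so `d (x_n, x) → 0`. The reverse
distances tend to `0` by compactness of `K`: along any subsequence staying `ε`-far from `x`, a
cluster point `y ∈ K` satisfies `d (y, x) = 0`, hence `y = x` by T1, and then the subsequence
must enter the ball of radius `ε` around `x`.
-/

namespace QuasiMetric

variable {X : Type*} (Q : QuasiMetric X)

lemma d_self (x : X) : Q.d x x = 0 := ((Q.eq_iff x x).mp rfl).1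

lemma ball_mem_nhds (x : X) {ε : ℝ} (hε : 0 < ε) : Q.ball x ε ∈ @nhds X Q.tau x := by
  let _ : TopologicalSpace X := Q.tau
  have hopen : IsOpen (Q.ball x ε) := TopologicalSpace.isOpen_generateFrom_of_mem ⟨x, ε, hε, rfl⟩
  refine hopen.mem_nhds ?_
  simpa [ball, d_self] using hε

lemma d_eq_zero_of_mapClusterPt {ι : Type*} {l : Filter ι} {u : ι → X} {x y : X}
    (hy : @MapClusterPt X Q.tau ι y l u)
    (hux : Filter.Tendsto (fun i => Q.d (u i) x) l (nhds 0)) : Q.d y x = 0 := by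
  let _ : TopologicalSpace X := Q.tau
  refine le_antisymm (le_of_forall_pos_lt_add fun ε hε => ?_) (Q.nonneg y x)
  have hnear : ∃ᶠ i in l, Q.d y (u i) < ε / 2 :=
    mapClusterPt_iff_frequently.mp hy _ (Q.ball_mem_nhds y (half_pos hε))
  have hclose : ∀ᶠ i in l, Q.d (u i) x < ε / 2 :=
    hux.eventually (gt_mem_nhds (half_pos hε))
  obtain ⟨i, hyu, hux⟩ := (hnear.and_eventually hclose).exists
  linarith [Q.triangle y (u i) x]

lemma tendsto_d_of_tendsto_d_of_isCompact (hT1 : Q.IsT1) {K : Set X}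
    (hK : @IsCompact X Q.tau K) {u : ℕ → X} (huK : ∀ n, u n ∈ K) {x : X}
    (hux : Filter.Tendsto (fun n => Q.d (u n) x) Filter.atTop (nhds 0)) :
    Filter.Tendsto (fun n => Q.d x (u n)) Filter.atTop (nhds 0) := by
  let _ : TopologicalSpace X := Q.tau
  refine tendsto_order.2 ⟨fun a ha => Filter.Eventually.of_forall fun n =>
    ha.trans_le (Q.nonneg _ _), fun ε hε => ?_⟩
  by_contra hfar
  set l := Filter.atTop ⊓ Filter.principal {n | ¬Q.d x (u n) < ε}
  have : l.NeBot := Filter.frequently_iff_neBot.mp (Filter.not_eventually.mp hfar)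
  have hl : l ≤ Filter.atTop := inf_le_left
  obtain ⟨y, -, hy⟩ := hK.exists_mapClusterPt (f := l)
    (Filter.tendsto_principal.mpr (Filter.Eventually.of_forall huK))
  obtain rfl : y = x := hT1 y x (Q.d_eq_zero_of_mapClusterPt hy (hux.mono_left hl))
  have hnear : ∃ᶠ n in l, Q.d y (u n) < ε :=
    mapClusterPt_iff_frequently.mp hy _ (Q.ball_mem_nhds y hε)
  have hfar' : ∀ᶠ n in l, ¬Q.d y (u n) < ε :=
    Filter.mem_inf_of_right (Filter.mem_principal_self _)
  exact (hnear.and_eventually hfar').exists.elim fun n h => h.2 h.1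

variable {Q} in
lemma IsStdRep.exists_mem_d_lt {K : Set X} {c : Q.Chain} (hc : Q.IsStdRep K c) {x : X}
    (hx : x ∈ K) (n : ℕ) : ∃ p ∈ (c.1 n).1, p.1 ∈ K ∧ Q.d p.1 x < 1 / ((n : ℝ) + 1) := by
  obtain ⟨m, xs, hxsK, hcover, hcn⟩ := hc
  obtain ⟨i, hi1, him, hi⟩ := hcover (n + 1) (by omega) x hx
  refine ⟨(xs (n + 1) i, ((n : ℝ≥0) + 1)⁻¹), ?_, hxsK _ _ (by omega) hi1 him, ?_⟩
  · rw [hcn n]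
    exact ⟨n + 1, i, by omega, le_rfl, hi1, him, rfl⟩
  · refine hi.trans_le ?_
    push_cast
    gcongr
    nlinarith

end QuasiMetric

theorem stmt1_general {X : Type} (Q : QuasiMetric X) (hT1 : Q.IsT1)
    (K : Set X) (hK : K ∈ Q.K0) (x : X) (hx : x ∈ K)
    (c : Q.Chain) (hc : Q.IsStdRep K c) :
    ∃ a : ℕ → FB X, (∀ n, a n ∈ (c.1 n).1) ∧
      Filter.Tendsto (fun n => Q.dstar (a n).1 x) Filter.atTop (nhds 0) := by
  choose a haF haK hax using hc.exists_mem_d_lt hx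
  have hto : Filter.Tendsto (fun n => Q.d (a n).1 x) Filter.atTop (nhds 0) :=
    squeeze_zero (fun n => Q.nonneg _ _) (fun n => (hax n).le)
      tendsto_one_div_add_atTop_nhds_zero_nat
  have hfrom := Q.tendsto_d_of_tendsto_d_of_isCompact hT1 hK.2 haK hto
  refine ⟨a, haF, ?_⟩
  simpa only [QuasiMetric.dstar, max_self] using hto.max hfrom

/-- for `x ∈ K` and a standard representation `(F_n)` of `K`, there is a sequence
`(x_n, r_n) ∈ F_n` with `d*(x_n, x) → 0`. -/
theorem stmt1 {X : Type} (Q : QuasiMetric X) (hT1 : Q.IsT1) (hB : Q.Bounded)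
    (hY : Q.SeqYonedaComplete) (K : Set X) (hK : K ∈ Q.K0) (x : X) (hx : x ∈ K)
    (c : Q.Chain) (hc : Q.IsStdRep K c) :
    ∃ a : ℕ → FB X, (∀ n, a n ∈ (c.1 n).1) ∧
      Filter.Tendsto (fun n => Q.dstar (a n).1 x) Filter.atTop (nhds 0) :=
  stmt1_general Q hT1 K hK x hx c hc
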